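/- Let α > -1/2. There is a constant C > 0 such that for all s, y, z > 0 with y z e^{-s}/(1 - e^{-2s}) ≤ 1, |∂/∂s W_s^α(y,z)| ≤ C (yz)^{α + 1/2} e^{-(y² + z²)/(8s)} e^{-(α+1)s} (1 - e^{-2s})^{-(α+2)}, where W_s^α is the Laguerre heat kernel. -/

import Mathlib

open MeasureTheory Real

/-- The modified Bessel function of the first kind `I_a`. -/
noncomputable def besselI (a x : ℝ) : ℝ :=
  ∑' k : ℕ, (x / 2) ^ (2 * (k : ℝ) + a) / ((Nat.factorial k : ℝ) * Real.Gamma ((k : ℝ) + a + 1))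

/-- The Laguerre heat kernel `W_s^α(y,z)`. -/
noncomputable def laguerreHeatKernel (a s y z : ℝ) : ℝ :=
  (2 * Real.exp (-s) / (1 - Real.exp (-2 * s))) ^ ((1 : ℝ) / 2) *
    (2 * y * z * Real.exp (-s) / (1 - Real.exp (-2 * s))) ^ ((1 : ℝ) / 2) *
    besselI a (2 * y * z * Real.exp (-s) / (1 - Real.exp (-2 * s))) *
    Real.exp (-(1 / 2) * (y ^ 2 + z ^ 2) * (1 + Real.exp (-2 * s)) / (1 - Real.exp (-2 * s)))

/-- The Hermite (Mehler) heat kernel `W_s(x,y)`. -/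
noncomputable def hermiteHeatKernel (s x y : ℝ) : ℝ :=
  Real.pi ^ (-(1 : ℝ) / 2) * (Real.exp (-s) / (1 - Real.exp (-2 * s))) ^ ((1 : ℝ) / 2) *
    Real.exp (-((x - Real.exp (-s) * y) ^ 2 + (y - Real.exp (-s) * x) ^ 2) /
      (2 * (1 - Real.exp (-2 * s))))

/-!
Expanding `I_α` gives
`W_s^α(y,z) = 2 (yz)^{α+1/2} ∑ₖ (yz h)^{2k} h^{α+1} e^{-(y²+z²) coth s / 2} / (k! Γ(k+α+1))`
with `h = 1/(2 sinh s)`. Since `h' = -h coth s` and `coth' = -4h²`, the `k`-th term has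
logarithmic derivative `2(y²+z²)h² - (2k+α+1) coth s`, of size at most
`(2k+α+2)(coth s + 2(y²+z²)h²)`; for `yz h ≤ 1` the weights `(2k+α+2)/(k! Γ(k+α+1))` sum to a
constant. Half of the Gaussian factor absorbs `(y²+z²)h²` (as `x e^{-x} ≤ 1` and
`h ≤ coth s / 2`), the other half is at most `e^{-(y²+z²)/(8s)}` because `coth s ≥ 1/(2s)`, and
`coth s ≤ 2/(1-e^{-2s})` supplies the last power.
-/

lemma HasDerivAt.rpow_const_of_logDeriv {f : ℝ → ℝ} {x c : ℝ} (p : ℝ)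
    (hf : HasDerivAt f (f x * c) x) (hx : 0 < f x) :
    HasDerivAt (fun t => f t ^ p) (f x ^ p * (p * c)) x := by
  refine (hf.rpow_const (p := p) (Or.inl hx.ne')).congr_deriv ?_
  rw [rpow_sub_one hx.ne']
  field_simp

lemma Real.one_le_Gamma {x : ℝ} (hx : 2 ≤ x) : 1 ≤ Gamma x :=
  Gamma_two ▸ Gamma_strictMonoOn_Ici.monotoneOn Set.self_mem_Ici hx hx

namespace Laguerre

open Nat

/-- `halfCsch s = 1 / (2 sinh s)` and `coth s`, in the exponential form in which they occur in
`laguerreHeatKernel`. -/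
noncomputable def halfCsch (s : ℝ) : ℝ := exp (-s) / (1 - exp (-2 * s))

noncomputable def coth (s : ℝ) : ℝ := (1 + exp (-2 * s)) / (1 - exp (-2 * s))

noncomputable def gaussianFactor (R s : ℝ) : ℝ := exp (-(1 / 2) * R * coth s)

noncomputable def besselCoeff (a : ℝ) (k : ℕ) : ℝ := ((k ! : ℝ) * Gamma (k + a + 1))⁻¹

noncomputable def kernelTerm (a b R : ℝ) (k : ℕ) (s : ℝ) : ℝ :=
  besselCoeff a k * (b * halfCsch s) ^ (2 * (k : ℝ)) * halfCsch s ^ (a + 1) * gaussianFactor R s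

section Elementary

variable {s : ℝ}

lemma exp_neg_two_mul (s : ℝ) : exp (-2 * s) = exp (-s) ^ 2 := by
  rw [← exp_nat_mul]; ring_nf

lemma one_sub_exp_neg_two_mul_pos (hs : 0 < s) : 0 < 1 - exp (-2 * s) := by
  have : exp (-2 * s) < 1 := exp_lt_one_iff.mpr (by linarith)
  linarith

lemma one_sub_exp_neg_two_mul_le (s : ℝ) : 1 - exp (-2 * s) ≤ 2 * s := by
  linarith [add_one_le_exp (-2 * s)]

lemma halfCsch_pos (hs : 0 < s) : 0 < halfCsch s :=
  div_pos (exp_pos _) (one_sub_exp_neg_two_mul_pos hs)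

lemma coth_pos (hs : 0 < s) : 0 < coth s :=
  div_pos (by positivity) (one_sub_exp_neg_two_mul_pos hs)

lemma halfCsch_le_inv (hs : 0 < s) : halfCsch s ≤ (1 - exp (-2 * s))⁻¹ := by
  rw [halfCsch, div_eq_mul_inv]
  exact mul_le_of_le_one_left (inv_pos.mpr (one_sub_exp_neg_two_mul_pos hs)).le
    (exp_le_one_iff.mpr (by linarith))

lemma coth_le (hs : 0 < s) : coth s ≤ 2 / (1 - exp (-2 * s)) := by
  have := exp_le_one_iff.mpr (show -2 * s ≤ 0 by linarith)
  rw [coth]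
  gcongr
  linarith

lemma inv_two_mul_le_coth (hs : 0 < s) : (2 * s)⁻¹ ≤ coth s := by
  have hu := one_sub_exp_neg_two_mul_pos hs
  rw [coth, inv_eq_one_div, div_le_div_iff₀ (by linarith) hu]
  nlinarith [one_sub_exp_neg_two_mul_le s, exp_pos (-2 * s)]

-- `cosh s ≥ 1`
lemma halfCsch_le_coth_div_two (hs : 0 < s) : halfCsch s ≤ coth s / 2 := by
  rw [halfCsch, coth, div_div, div_le_div_iff₀ (one_sub_exp_neg_two_mul_pos hs)
    (by linarith [one_sub_exp_neg_two_mul_pos hs]), exp_neg_two_mul]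
  have hu : 0 < 1 - exp (-s) ^ 2 := exp_neg_two_mul s ▸ one_sub_exp_neg_two_mul_pos hs
  nlinarith [mul_nonneg hu.le (sq_nonneg (1 - exp (-s)))]

lemma gaussianFactor_pos (R s : ℝ) : 0 < gaussianFactor R s := exp_pos _

lemma gaussianFactor_le_one {R : ℝ} (hR : 0 ≤ R) (hs : 0 < s) : gaussianFactor R s ≤ 1 :=
  exp_le_one_iff.mpr (by nlinarith [coth_pos hs])

lemma halfCsch_rpow_mul_inv (hs : 0 < s) (p : ℝ) :
    halfCsch s ^ p * (1 - exp (-2 * s))⁻¹ =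
      exp (-p * s) * (1 - exp (-2 * s)) ^ (-(p + 1)) := by
  have hu := one_sub_exp_neg_two_mul_pos hs
  rw [halfCsch, div_rpow (exp_pos _).le hu.le, ← exp_mul, neg_add, rpow_add hu, rpow_neg_one,
    rpow_neg hu.le]
  ring_nf

end Elementary

section Derivatives

variable {s : ℝ}

lemma hasDerivAt_halfCsch (hs : 0 < s) :
    HasDerivAt halfCsch (halfCsch s * -coth s) s := by
  have hu := one_sub_exp_neg_two_mul_pos hs
  have hnum : HasDerivAt (fun t => exp (-t)) (-exp (-s)) s := by
    simpa using (hasDerivAt_neg s).exp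
  have hden : HasDerivAt (fun t => 1 - exp (-2 * t)) (2 * exp (-2 * s)) s := by
    simpa [mul_comm] using (((hasDerivAt_id s).const_mul (-2)).exp).const_sub 1
  refine (hnum.div hden hu.ne').congr_deriv ?_
  rw [halfCsch, coth]
  field_simp
  ring

lemma hasDerivAt_coth (hs : 0 < s) : HasDerivAt coth (-(4 * halfCsch s ^ 2)) s := by
  have hu := one_sub_exp_neg_two_mul_pos hs
  have hexp : HasDerivAt (fun t => exp (-2 * t)) (-2 * exp (-2 * s)) s := by
    simpa [mul_comm] using ((hasDerivAt_id s).const_mul (-2)).exp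
  refine ((hexp.const_add 1).div (hexp.const_sub 1) hu.ne').congr_deriv ?_
  rw [halfCsch, exp_neg_two_mul] at *
  field_simp
  ring

lemma hasDerivAt_gaussianFactor (R : ℝ) (hs : 0 < s) :
    HasDerivAt (gaussianFactor R) (gaussianFactor R s * (2 * R * halfCsch s ^ 2)) s := by
  refine (((hasDerivAt_coth hs).const_mul (-(1 / 2) * R)).exp).congr_deriv ?_
  rw [gaussianFactor]
  ring

lemma hasDerivAt_kernelTerm (a : ℝ) {b : ℝ} (R : ℝ) (hb : 0 < b) (k : ℕ) (hs : 0 < s) :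
    HasDerivAt (kernelTerm a b R k)
      (kernelTerm a b R k s * (2 * R * halfCsch s ^ 2 - (2 * k + a + 1) * coth s)) s := by
  have hh := halfCsch_pos hs
  have hbh : HasDerivAt (fun t => b * halfCsch t) (b * halfCsch s * -coth s) s := by
    simpa [mul_assoc] using (hasDerivAt_halfCsch hs).const_mul b
  have hprod := (((hbh.rpow_const_of_logDeriv (2 * k) (mul_pos hb hh)).mul
    ((hasDerivAt_halfCsch hs).rpow_const_of_logDeriv (a + 1) hh)).mul
    (hasDerivAt_gaussianFactor R hs)).const_mul (besselCoeff a k)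
  have hterm : kernelTerm a b R k = fun t =>
      besselCoeff a k * ((b * halfCsch t) ^ (2 * (k : ℝ)) * halfCsch t ^ (a + 1) *
        gaussianFactor R t) := by
    funext t; rw [kernelTerm]; ring
  rw [hterm]
  exact hprod.congr_deriv (by simp only [Pi.mul_apply]; ring)

end Derivatives

section Summability

variable {a : ℝ}

lemma besselCoeff_pos (ha : -1 < a) (k : ℕ) : 0 < besselCoeff a k :=
  inv_pos.mpr (mul_pos (by positivity) (Gamma_pos_of_pos (by linarith [k.cast_nonneg (α := ℝ)])))

lemma besselCoeff_le_inv_factorial (ha : -1 < a) {k : ℕ} (hk : 2 ≤ k) :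
    besselCoeff a k ≤ (k ! : ℝ)⁻¹ := by
  have hk' : (2 : ℝ) ≤ k := by exact_mod_cast hk
  rw [besselCoeff, mul_inv]
  exact mul_le_of_le_one_right (by positivity)
    (inv_le_one_of_one_le₀ (one_le_Gamma (by linarith)))

lemma summable_besselCoeff_mul_pow (ha : -1 < a) (x : ℝ) :
    Summable fun k => besselCoeff a k * x ^ k := by
  refine .of_norm_bounded_eventually_nat (summable_pow_div_factorial |x|) ?_
  filter_upwards [Filter.eventually_ge_atTop 2] with k hk
  rw [norm_mul, norm_pow, norm_of_nonneg (besselCoeff_pos ha k).le, norm_eq_abs, div_eq_inv_mul]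
  gcongr
  exact besselCoeff_le_inv_factorial ha hk

lemma rpow_two_mul_natCast {x : ℝ} (hx : 0 ≤ x) (k : ℕ) : x ^ (2 * (k : ℝ)) = (x ^ 2) ^ k := by
  rw [rpow_mul_natCast hx, rpow_two]

lemma summable_besselCoeff_mul_rpow (ha : -1 < a) {x : ℝ} (hx : 0 ≤ x) :
    Summable fun k : ℕ => besselCoeff a k * (2 * k + a + 2) * x ^ (2 * (k : ℝ)) := by
  refine .of_nonneg_of_le (fun k => ?_) (fun k => ?_)
    ((summable_besselCoeff_mul_pow ha (2 * x ^ 2)).mul_left (a + 4))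
  · have := besselCoeff_pos ha k
    have : 0 ≤ 2 * (k : ℝ) + a + 2 := by linarith [k.cast_nonneg (α := ℝ)]
    positivity
  · have hk : (k : ℝ) ≤ 2 ^ k := by exact_mod_cast (Nat.lt_two_pow_self).le
    have h1 : (1 : ℝ) ≤ 2 ^ k := one_le_pow₀ one_le_two
    have hweight : 2 * (k : ℝ) + a + 2 ≤ (a + 4) * 2 ^ k := by nlinarith
    have := besselCoeff_pos ha k
    rw [rpow_two_mul_natCast hx, mul_pow]
    calc besselCoeff a k * (2 * k + a + 2) * (x ^ 2) ^ k
        ≤ besselCoeff a k * ((a + 4) * 2 ^ k) * (x ^ 2) ^ k := by gcongr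
      _ = (a + 4) * (besselCoeff a k * (2 ^ k * (x ^ 2) ^ k)) := by ring

lemma summable_besselCoeff_mul (ha : -1 < a) :
    Summable fun k : ℕ => besselCoeff a k * (2 * k + a + 2) := by
  simpa using summable_besselCoeff_mul_rpow ha zero_le_one

lemma tsum_besselCoeff_mul_pos (ha : -1 < a) :
    0 < ∑' k : ℕ, besselCoeff a k * (2 * k + a + 2) :=
  (summable_besselCoeff_mul ha).tsum_pos
    (fun k => (mul_pos (besselCoeff_pos ha k) (by linarith [k.cast_nonneg (α := ℝ)])).le) 0
    (mul_pos (besselCoeff_pos ha 0) (by push_cast; linarith))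

end Summability

section Bounds

variable {a b R s : ℝ}

lemma abs_kernelTerm_mul_le {H C G : ℝ} (ha : -1 < a) (hb : 0 < b) (hR : 0 ≤ R) (hs : 0 < s)
    (hH : halfCsch s ≤ H) (hC : coth s ≤ C) (hG : gaussianFactor R s ≤ G) (k : ℕ) :
    |kernelTerm a b R k s * (2 * R * halfCsch s ^ 2 - (2 * k + a + 1) * coth s)| ≤
      besselCoeff a k * (2 * k + a + 2) * (b * H) ^ (2 * (k : ℝ)) *
        (H ^ (a + 1) * G * (C + 2 * R * H ^ 2)) := by
  have hh := halfCsch_pos hs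
  have hc := coth_pos hs
  have hβ := besselCoeff_pos ha k
  have hk : (0 : ℝ) ≤ k := k.cast_nonneg
  have hE := gaussianFactor_pos R s
  have hterm : |kernelTerm a b R k s| ≤
      besselCoeff a k * (b * H) ^ (2 * (k : ℝ)) * H ^ (a + 1) * G := by
    have hH0 : 0 < H := hh.trans_le hH
    rw [abs_of_pos (by rw [kernelTerm]; positivity), kernelTerm]
    gcongr
    all_goals first | positivity | linarith
  have hfactor : |2 * R * halfCsch s ^ 2 - (2 * k + a + 1) * coth s| ≤
      (2 * k + a + 2) * (C + 2 * R * H ^ 2) := by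
    have hRh : 2 * R * halfCsch s ^ 2 ≤ 2 * R * H ^ 2 := by gcongr
    rw [abs_le]
    constructor <;> nlinarith [mul_nonneg hR (sq_nonneg (halfCsch s))]
  calc _ = |kernelTerm a b R k s| * |2 * R * halfCsch s ^ 2 - (2 * k + a + 1) * coth s| :=
        abs_mul _ _
    _ ≤ (besselCoeff a k * (b * H) ^ (2 * (k : ℝ)) * H ^ (a + 1) * G) *
          ((2 * k + a + 2) * (C + 2 * R * H ^ 2)) :=
        mul_le_mul hterm hfactor (abs_nonneg _) (hterm.trans' (abs_nonneg _))
    _ = _ := by ring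

lemma gaussianFactor_mul_le (hR : 0 ≤ R) (hs : 0 < s) :
    gaussianFactor R s * (coth s + 2 * R * halfCsch s ^ 2) ≤
      6 * exp (-R / (8 * s)) / (1 - exp (-2 * s)) := by
  have hc := coth_pos hs
  have hhc := halfCsch_le_coth_div_two hs
  have hh := halfCsch_pos hs
  obtain ⟨x, hx⟩ : ∃ x, x = R * coth s / 4 := ⟨_, rfl⟩
  have hx0 : 0 ≤ x := by rw [hx]; positivity
  have hsplit : gaussianFactor R s = exp (-x) * exp (-x) := by
    rw [gaussianFactor, ← exp_add, hx]; ring_nf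
  have hfirst : exp (-x) ≤ exp (-R / (8 * s)) := by
    rw [exp_le_exp, hx, neg_div, neg_le_neg_iff]
    calc R / (8 * s) = R * (2 * s)⁻¹ / 4 := by field_simp; ring
      _ ≤ R * coth s / 4 := by gcongr; exact inv_two_mul_le_coth hs
  have hsecond : exp (-x) * (coth s + 2 * R * halfCsch s ^ 2) ≤ 3 * coth s := by
    have hxexp : x * exp (-x) ≤ 1 := (mul_exp_neg_le_exp_neg_one x).trans (by simp)
    have hexp : exp (-x) ≤ 1 := exp_le_one_iff.mpr (by linarith)
    have hRh : 2 * R * halfCsch s ^ 2 * exp (-x) ≤ 2 * coth s := by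
      calc 2 * R * halfCsch s ^ 2 * exp (-x)
          = 8 * halfCsch s ^ 2 / coth s * (x * exp (-x)) := by rw [hx]; field_simp; ring
        _ ≤ 8 * (coth s / 2) ^ 2 / coth s * 1 := by gcongr
        _ = 2 * coth s := by field_simp; ring
    nlinarith
  calc gaussianFactor R s * (coth s + 2 * R * halfCsch s ^ 2)
      = exp (-x) * (exp (-x) * (coth s + 2 * R * halfCsch s ^ 2)) := by rw [hsplit]; ring
    _ ≤ exp (-R / (8 * s)) * (3 * (2 / (1 - exp (-2 * s)))) :=
        mul_le_mul hfirst (hsecond.trans (by gcongr; exact coth_le hs)) (by positivity)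
          (exp_pos _).le
    _ = 6 * exp (-R / (8 * s)) / (1 - exp (-2 * s)) := by ring

lemma abs_tsum_kernelTerm_mul_le (ha : -1 < a) (hb : 0 < b) (hR : 0 ≤ R) (hs : 0 < s)
    (hbh : b * halfCsch s ≤ 1) :
    |∑' k : ℕ, kernelTerm a b R k s * (2 * R * halfCsch s ^ 2 - (2 * k + a + 1) * coth s)| ≤
      (∑' k : ℕ, besselCoeff a k * (2 * k + a + 2)) *
        (halfCsch s ^ (a + 1) * (6 * exp (-R / (8 * s)) / (1 - exp (-2 * s)))) := by
  have hh := halfCsch_pos hs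
  have hX : 0 ≤ halfCsch s ^ (a + 1) * gaussianFactor R s * (coth s + 2 * R * halfCsch s ^ 2) := by
    have := coth_pos hs; have := gaussianFactor_pos R s; positivity
  rw [← norm_eq_abs]
  refine tsum_of_norm_bounded ((summable_besselCoeff_mul ha).hasSum.mul_right _) fun k => ?_
  refine (abs_kernelTerm_mul_le ha hb hR hs le_rfl le_rfl le_rfl k).trans ?_
  have hβ : 0 ≤ besselCoeff a k * (2 * k + a + 2) :=
    mul_nonneg (besselCoeff_pos ha k).le (by linarith [k.cast_nonneg (α := ℝ)])
  refine mul_le_mul ?_ ?_ hX hβ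
  · exact mul_le_of_le_one_right hβ (rpow_le_one (by positivity) hbh (by positivity))
  · rw [mul_assoc]
    exact mul_le_mul_of_nonneg_left (gaussianFactor_mul_le hR hs) (by positivity)

end Bounds

variable {a y z s : ℝ}

lemma laguerreHeatKernel_eq_tsum (hy : 0 < y) (hz : 0 < z) (hs : 0 < s) :
    laguerreHeatKernel a s y z =
      2 * (y * z) ^ (a + 1 / 2) * ∑' k, kernelTerm a (y * z) (y ^ 2 + z ^ 2) k s := by
  have hb : 0 < y * z := mul_pos hy hz
  have hh := halfCsch_pos hs
  set b := y * z
  set h := halfCsch s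
  have hsqrt : (2 * h) ^ (1 / 2 : ℝ) * (2 * b * h) ^ (1 / 2 : ℝ) = 2 * h * b ^ (1 / 2 : ℝ) := by
    rw [show 2 * b * h = b * (2 * h) by ring, mul_rpow hb.le (by positivity), ← mul_assoc,
      mul_comm _ (b ^ _), mul_assoc, ← rpow_add (by positivity)]
    norm_num
    ring
  have hgauss : exp (-(1 / 2) * (y ^ 2 + z ^ 2) * (1 + exp (-2 * s)) / (1 - exp (-2 * s))) =
      gaussianFactor (y ^ 2 + z ^ 2) s := by
    rw [gaussianFactor, coth, mul_div_assoc]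
  rw [laguerreHeatKernel, besselI, hgauss, show 2 * exp (-s) / (1 - exp (-2 * s)) = 2 * h by
    simp only [h, halfCsch]; ring, show 2 * y * z * exp (-s) / (1 - exp (-2 * s)) = 2 * b * h by
    simp only [b, h, halfCsch]; ring, hsqrt, ← tsum_mul_left, ← tsum_mul_right, ← tsum_mul_left]
  refine tsum_congr fun k => ?_
  rw [kernelTerm, besselCoeff, show 2 * b * h / 2 = b * h by ring, rpow_add (by positivity),
    rpow_add hb, rpow_add_one hh.ne', mul_rpow (z := a) hb.le hh.le]
  ring

lemma hasDerivAt_laguerreHeatKernel (ha : -1 < a) (hy : 0 < y) (hz : 0 < z) (hs : 0 < s) :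
    HasDerivAt (fun s => laguerreHeatKernel a s y z)
      (2 * (y * z) ^ (a + 1 / 2) * ∑' k : ℕ, kernelTerm a (y * z) (y ^ 2 + z ^ 2) k s *
        (2 * (y ^ 2 + z ^ 2) * halfCsch s ^ 2 - (2 * k + a + 1) * coth s)) s := by
  have hb : 0 < y * z := mul_pos hy hz
  have hR : 0 ≤ y ^ 2 + z ^ 2 := by positivity
  have hs2 : 0 < s / 2 := by linarith
  set H := (1 - exp (-2 * (s / 2)))⁻¹
  have hH0 : 0 ≤ H := (halfCsch_pos hs2).le.trans (halfCsch_le_inv hs2)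
  have hbound : ∀ t ∈ Set.Ioi (s / 2), halfCsch t ≤ H ∧ coth t ≤ 2 * H := by
    intro t ht
    have ht0 : 0 < t := hs2.trans ht
    have hmono : (1 - exp (-2 * t))⁻¹ ≤ H := inv_anti₀ (one_sub_exp_neg_two_mul_pos hs2)
      (sub_le_sub_left (exp_le_exp.mpr (by linarith [Set.mem_Ioi.mp ht])) 1)
    exact ⟨(halfCsch_le_inv ht0).trans hmono,
      (coth_le ht0).trans (by rw [div_eq_mul_inv]; gcongr)⟩
  have hsum := hasDerivAt_tsum_of_isPreconnected
    ((summable_besselCoeff_mul_rpow ha (mul_nonneg hb.le hH0)).mul_right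
      (H ^ (a + 1) * 1 * (2 * H + 2 * (y ^ 2 + z ^ 2) * H ^ 2)))
    isOpen_Ioi isPreconnected_Ioi
    (fun k t ht => hasDerivAt_kernelTerm a _ hb k (hs2.trans ht))
    (fun k t ht => abs_kernelTerm_mul_le ha hb hR (hs2.trans ht) (hbound t ht).1 (hbound t ht).2
      (gaussianFactor_le_one hR (hs2.trans ht)) k)
    (half_lt_self hs) ?_ (half_lt_self hs)
  · refine (hsum.const_mul _).congr_of_eventuallyEq ?_
    filter_upwards [Ioi_mem_nhds hs] with t ht
    exact laguerreHeatKernel_eq_tsum hy hz ht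
  · have hh := halfCsch_pos hs
    refine ((summable_besselCoeff_mul_pow ha ((y * z * halfCsch s) ^ 2)).mul_right
      (halfCsch s ^ (a + 1) * gaussianFactor (y ^ 2 + z ^ 2) s)).congr fun k => ?_
    rw [kernelTerm, rpow_two_mul_natCast (by positivity)]
    ring

end Laguerre

open Laguerre in
theorem stmt13 (a : ℝ) (ha : -(1 / 2) < a) :
    ∃ C > 0, ∀ s y z : ℝ, 0 < s → 0 < y → 0 < z →
      y * z * Real.exp (-s) / (1 - Real.exp (-2 * s)) ≤ 1 →
        |deriv (fun s => laguerreHeatKernel a s y z) s| ≤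
          C * (y * z) ^ (a + 1 / 2) * Real.exp (-(y ^ 2 + z ^ 2) / (8 * s)) *
            Real.exp (-(a + 1) * s) * (1 - Real.exp (-2 * s)) ^ (-(a + 2)) := by
  have ha' : -1 < a := by linarith
  refine ⟨12 * ∑' k : ℕ, besselCoeff a k * (2 * k + a + 2),
    by have := tsum_besselCoeff_mul_pos ha'; positivity, fun s y z hs hy hz hbh => ?_⟩
  have hbh' : y * z * halfCsch s ≤ 1 := by rwa [halfCsch, ← mul_div_assoc]
  rw [(hasDerivAt_laguerreHeatKernel ha' hy hz hs).deriv, abs_mul,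
    abs_of_pos (by have := mul_pos hy hz; positivity)]
  calc 2 * (y * z) ^ (a + 1 / 2) * |_|
      ≤ 2 * (y * z) ^ (a + 1 / 2) * ((∑' k : ℕ, besselCoeff a k * (2 * k + a + 2)) *
          (halfCsch s ^ (a + 1) *
            (6 * exp (-(y ^ 2 + z ^ 2) / (8 * s)) / (1 - exp (-2 * s))))) := by
        gcongr
        exact abs_tsum_kernelTerm_mul_le ha' (mul_pos hy hz) (by positivity) hs hbh'
    _ = 12 * (∑' k : ℕ, besselCoeff a k * (2 * k + a + 2)) * (y * z) ^ (a + 1 / 2) *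
          exp (-(y ^ 2 + z ^ 2) / (8 * s)) * (halfCsch s ^ (a + 1) * (1 - exp (-2 * s))⁻¹) := by
        ring
    _ = _ := by rw [halfCsch_rpow_mul_inv hs, show -(a + 2) = -(a + 1 + 1) by ring]; ring
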